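/- arXiv:1203.2126 — 5 statements merged into one kernel-verified Lean document; each statement's English description precedes it below -/
import Mathlib

section
/- Algebraic inequality for negative powers: Let q > 0, q ≠ 1, and a,b > 0. Then (b−a)(a^{−q} − b^{−q}) ≥ (4q/(1−q)²) ( b^{(1−q)/2} − a^{(1−q)/2} )². -/
/-!
With `r = (1 - q) / 2`, both sides are integrals over `[a, b]`:
`a^{-q} - b^{-q} = q ∫ x^{-q-1}` and `b^r - a^r = r ∫ x^{r-1}`. Since `(x^{r-1})² = x^{-q-1}`,
the Cauchy–Schwarz inequality `(∫ x^{r-1})² ≤ (b - a) ∫ x^{-q-1}`, multiplied by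
`4q / (1 - q)² · r² = q`, is the claim.
-/

open Real Set intervalIntegral

theorem sq_integral_le_mul_integral_sq_of_le {f : ℝ → ℝ} {a b : ℝ} (hab : a ≤ b)
    (hf : IntervalIntegrable f MeasureTheory.volume a b)
    (hf2 : IntervalIntegrable (fun x => f x ^ 2) MeasureTheory.volume a b) :
    (∫ x in a..b, f x) ^ 2 ≤ (b - a) * ∫ x in a..b, f x ^ 2 := by
  set I := ∫ x in a..b, f x
  set K := ∫ x in a..b, f x ^ 2
  have hexpand : ∫ x in a..b, ((b - a) * f x - I) ^ 2 = (b - a) * ((b - a) * K - I ^ 2) := by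
    have hsq : ∀ x, ((b - a) * f x - I) ^ 2
        = (b - a) ^ 2 * f x ^ 2 - 2 * (b - a) * I * f x + I ^ 2 := fun x => by ring
    simp_rw [hsq]
    rw [integral_add, integral_sub, integral_const_mul, integral_const_mul, integral_const]
    · simp only [smul_eq_mul, I, K]
      ring
    all_goals first
      | exact intervalIntegrable_const
      | exact hf2.const_mul _
      | exact hf.const_mul _
      | exact (hf2.const_mul _).sub (hf.const_mul _)
  rcases hab.eq_or_lt with rfl | hlt
  · simp [I]
  · have hvar : 0 ≤ (b - a) * ((b - a) * K - I ^ 2) :=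
      hexpand ▸ integral_nonneg hab fun x _ => sq_nonneg _
    exact sub_nonneg.mp ((mul_nonneg_iff_of_pos_left (sub_pos.2 hlt)).mp hvar)

theorem sq_integral_le_mul_integral_sq {f : ℝ → ℝ} {a b : ℝ}
    (hf : IntervalIntegrable f MeasureTheory.volume a b)
    (hf2 : IntervalIntegrable (fun x => f x ^ 2) MeasureTheory.volume a b) :
    (∫ x in a..b, f x) ^ 2 ≤ (b - a) * ∫ x in a..b, f x ^ 2 := by
  rcases le_total a b with hab | hba
  · exact sq_integral_le_mul_integral_sq_of_le hab hf hf2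
  · rw [integral_symm, integral_symm b, neg_sq, ← neg_mul_neg, neg_sub, neg_neg]
    exact sq_integral_le_mul_integral_sq_of_le hba hf.symm hf2.symm

theorem rpow_sub_rpow_eq_mul_integral_rpow {a b : ℝ} (ha : 0 < a) (hb : 0 < b) (p : ℝ) :
    b ^ p - a ^ p = p * ∫ x in a..b, x ^ (p - 1) := by
  have hpos : ∀ x ∈ uIcc a b, 0 < x := fun x hx => (lt_min ha hb).trans_le hx.1
  rw [← integral_const_mul, integral_eq_sub_of_hasDerivAt
    (fun x hx => hasDerivAt_rpow_const (Or.inl (hpos x hx).ne'))]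
  exact (intervalIntegrable_rpow (Or.inr fun h => (hpos 0 h).false)).const_mul p

theorem sq_rpow_sub_rpow_le {a b : ℝ} (ha : 0 < a) (hb : 0 < b) (p : ℝ) :
    (b ^ p - a ^ p) ^ 2 ≤ p ^ 2 * ((b - a) * ∫ x in a..b, x ^ (2 * p - 2)) := by
  have hpos : ∀ x ∈ uIcc a b, 0 < x := fun x hx => (lt_min ha hb).trans_le hx.1
  have hcont : ContinuousOn (fun x => x ^ (p - 1)) (uIcc a b) := fun x hx =>
    (continuousAt_rpow_const _ _ (Or.inl (hpos x hx).ne')).continuousWithinAt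
  have hsq : ∫ x in a..b, x ^ (2 * p - 2) = ∫ x in a..b, (x ^ (p - 1)) ^ 2 := by
    refine integral_congr fun x hx => ?_
    rw [← rpow_mul_natCast (hpos x hx).le]
    ring_nf
  rw [rpow_sub_rpow_eq_mul_integral_rpow ha hb, mul_pow, hsq]
  gcongr
  exact sq_integral_le_mul_integral_sq hcont.intervalIntegrable (hcont.pow 2).intervalIntegrable

/-- **Algebraic inequality for negative powers** (Lemma 3.2): for `q > 0`, `q ≠ 1`,
`a,b > 0`: `(b−a)(a^{−q} − b^{−q}) ≥ (4q/(1−q)²)(b^{(1−q)/2} − a^{(1−q)/2})²`. -/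
theorem alg_ineq_negative_powers (q a b : ℝ) (hq : 0 < q) (hq1 : q ≠ 1)
    (ha : 0 < a) (hb : 0 < b) :
    4 * q / (1 - q) ^ 2 * (b ^ ((1 - q) / 2) - a ^ ((1 - q) / 2)) ^ 2 ≤
      (b - a) * (a ^ (-q) - b ^ (-q)) := by
  have hexp : 2 * ((1 - q) / 2) - 2 = -q - 1 := by ring
  have h1q : (1 - q) ^ 2 ≠ 0 := pow_ne_zero 2 (sub_ne_zero.2 hq1.symm)
  calc 4 * q / (1 - q) ^ 2 * (b ^ ((1 - q) / 2) - a ^ ((1 - q) / 2)) ^ 2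
      ≤ 4 * q / (1 - q) ^ 2 * (((1 - q) / 2) ^ 2 * ((b - a) * ∫ x in a..b, x ^ (-q - 1))) := by
        gcongr
        exact hexp ▸ sq_rpow_sub_rpow_le ha hb _
    _ = (b - a) * (q * ∫ x in a..b, x ^ (-q - 1)) := by
        field_simp
        ring
    _ = (b - a) * (a ^ (-q) - b ^ (-q)) := by
        rw [← neg_sub (b ^ (-q)), rpow_sub_rpow_eq_mul_integral_rpow ha hb]
        ring
end

section
/- Algebraic inequality with cut-off factors, case q > 1: Let q > 1, a,b > 0 and τ₁,τ₂ ≥ 0, and set ϑ(q) = max(4, (6q−5)/2). Then (b−a)( τ₁^{q+1} a^{−q} − τ₂^{q+1} b^{−q} ) ≥ (1/(q−1)) τ₁τ₂ [ (b/τ₂)^{(1−q)/2} − (a/τ₁)^{(1−q)/2} ]² − ϑ(q) (τ₂−τ₁)² [ (b/τ₂)^{1−q} + (a/τ₁)^{1−q} ], where, since 1−q < 0, any term (x/0)^{1−q} or (x/0)^{(1−q)/2} with x > 0 is interpreted as 0 (so division by τᵢ = 0 is allowed). -/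
/-!
Put `X = (a/τ₁)^((1-q)/2)`, `Y = (b/τ₂)^((1-q)/2)` and `r = 2/(q-1)`, so that
`(b/τ₂)/(a/τ₁) = (X/Y)^r`. When `τ₁, τ₂ > 0` the difference of the two sides is the quadratic form
`P τ₁² + Q τ₂² - R τ₁ τ₂` with `S = X² + Y²`, `P = ϑS - X²`, `Q = ϑS - Y²`, `R = 2ϑS - S - D`,
where `D = rpowGap r X Y`. It is nonnegative as soon as `R ≤ 0` or `R² ≤ 4PQ`, and
`4PQ - R² = 2(2ϑ-1)SD - D² - (X² - Y²)²`, so everything rests on `r (X² - Y²)² ≤ 12 S D`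
together with `12 ≤ r (2ϑ - 1)`. That bound follows from the Bernoulli-type estimate
`(X/Y)^r ≥ 1 + r (1 - Y/X)` for `X ≥ Y`, and `D` is symmetric in `X, Y`.
If some `τᵢ = 0` the inequality reduces to `b - a ≤ ϑ b` (or `a - b ≤ ϑ a`).
-/

open Real

lemma one_add_mul_one_sub_inv_le_rpow {t r : ℝ} (ht : 0 < t) (hr : 0 ≤ r) :
    1 + r * (1 - t⁻¹) ≤ t ^ r := by
  calc 1 + r * (1 - t⁻¹) ≤ r * log t + 1 := by
        nlinarith [one_sub_inv_le_log_of_pos ht]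
    _ ≤ exp (r * log t) := add_one_le_exp _
    _ = t ^ r := by rw [rpow_def_of_pos ht, mul_comm]

noncomputable def rpowGap (r X Y : ℝ) : ℝ :=
  (X / Y) ^ r * X ^ 2 + Y ^ 2 / (X / Y) ^ r - X ^ 2 - Y ^ 2 - r / 2 * (X - Y) ^ 2

lemma rpowGap_comm {X Y : ℝ} (r : ℝ) (hX : 0 < X) (hY : 0 < Y) :
    rpowGap r X Y = rpowGap r Y X := by
  have hinv : (Y / X) ^ r = ((X / Y) ^ r)⁻¹ := by
    rw [← inv_rpow (by positivity), inv_div]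
  have hW : (X / Y) ^ r ≠ 0 := (rpow_pos_of_pos (by positivity) r).ne'
  rw [rpowGap, rpowGap, hinv]
  field_simp
  ring

lemma mul_sq_sub_sq_sq_le_rpowGap_of_le {r X Y : ℝ} (hr : 0 ≤ r) (hY : 0 < Y) (hYX : Y ≤ X) :
    r * (X ^ 2 - Y ^ 2) ^ 2 ≤ 12 * (X ^ 2 + Y ^ 2) * rpowGap r X Y := by
  have hX : 0 < X := hY.trans_le hYX
  set W := (X / Y) ^ r with hW_def
  have hW : 0 < W := rpow_pos_of_pos (by positivity) r
  have bernoulli : r * (X - Y) ≤ X * (W - 1) := by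
    have h := one_add_mul_one_sub_inv_le_rpow (div_pos hX hY) hr
    rw [inv_div, ← hW_def] at h
    have h' := mul_le_mul_of_nonneg_left h hX.le
    have e : X * (1 + r * (1 - Y / X)) = X + r * (X - Y) := by field_simp
    linarith
  have gap_ge : (W - 1) * (X ^ 2 - Y ^ 2) ≤ W * X ^ 2 + Y ^ 2 / W - X ^ 2 - Y ^ 2 := by
    have e : W * X ^ 2 + Y ^ 2 / W - X ^ 2 - Y ^ 2 =
        (W - 1) * (X ^ 2 - Y ^ 2) + Y ^ 2 * (W - 1) ^ 2 / W := by
      field_simp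
      ring
    have : 0 ≤ Y ^ 2 * (W - 1) ^ 2 / W := by positivity
    linarith
  have hXY : 0 ≤ X - Y := sub_nonneg.mpr hYX
  have gap_lower : r * (X - Y) * (X ^ 2 - Y ^ 2) ≤ X * (W * X ^ 2 + Y ^ 2 / W - X ^ 2 - Y ^ 2) := by
    have hsq : 0 ≤ X ^ 2 - Y ^ 2 := by nlinarith
    nlinarith [mul_le_mul_of_nonneg_right bernoulli hsq]
  have poly : X * (X + Y) ^ 2 ≤ 6 * (X ^ 2 + Y ^ 2) * (X + 2 * Y) := by
    nlinarith [sq_nonneg (X - Y), mul_pos hX hY, pow_pos hY 3, pow_pos hX 3]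
  rw [rpowGap, ← hW_def]
  refine le_of_mul_le_mul_left ?_ hX
  nlinarith [mul_le_mul_of_nonneg_left poly (mul_nonneg hr (sq_nonneg (X - Y))),
    mul_le_mul_of_nonneg_left gap_lower (show (0 : ℝ) ≤ 12 * (X ^ 2 + Y ^ 2) by positivity)]

lemma mul_sq_sub_sq_sq_le_rpowGap {r X Y : ℝ} (hr : 0 ≤ r) (hX : 0 < X) (hY : 0 < Y) :
    r * (X ^ 2 - Y ^ 2) ^ 2 ≤ 12 * (X ^ 2 + Y ^ 2) * rpowGap r X Y := by
  rcases le_total Y X with hYX | hXY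
  · exact mul_sq_sub_sq_sq_le_rpowGap_of_le hr hY hYX
  · have h := mul_sq_sub_sq_sq_le_rpowGap_of_le hr hX hXY
    rw [rpowGap_comm r hY hX] at h
    linarith

lemma quadratic_form_nonneg {P Q R u v : ℝ} (hP : 0 ≤ P) (hQ : 0 ≤ Q) (hu : 0 ≤ u) (hv : 0 ≤ v)
    (hR : R ≤ 0 ∨ R ^ 2 ≤ 4 * P * Q) : 0 ≤ P * u ^ 2 + Q * v ^ 2 - R * u * v := by
  rcases hR with hR | hR
  · nlinarith [mul_nonneg hP (sq_nonneg u), mul_nonneg hQ (sq_nonneg v), mul_nonneg hu hv]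
  · nlinarith [sq_nonneg (P * u ^ 2 - Q * v ^ 2), mul_nonneg (mul_nonneg hu hv) (mul_nonneg hu hv),
      mul_nonneg hP (sq_nonneg u), mul_nonneg hQ (sq_nonneg v), mul_nonneg hu hv]

lemma homogeneous_cutoff_ineq {r ϑ τ₁ τ₂ X Y : ℝ} (hr : 0 < r) (hϑ : 1 ≤ ϑ)
    (hrϑ : 12 ≤ r * (2 * ϑ - 1)) (hτ₁ : 0 ≤ τ₁) (hτ₂ : 0 ≤ τ₂) (hX : 0 < X) (hY : 0 < Y) :
    r / 2 * (τ₁ * τ₂) * (Y - X) ^ 2 - ϑ * (τ₂ - τ₁) ^ 2 * (Y ^ 2 + X ^ 2) ≤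
      τ₁ * τ₂ * ((X / Y) ^ r * X ^ 2 + Y ^ 2 / (X / Y) ^ r) - τ₁ ^ 2 * X ^ 2 - τ₂ ^ 2 * Y ^ 2 := by
  set S := X ^ 2 + Y ^ 2 with hS_def
  set D := rpowGap r X Y with hD_def
  have hS : 0 < S := by positivity
  have hkey := mul_sq_sub_sq_sq_le_rpowGap hr.le hX hY
  rw [← hS_def, ← hD_def] at hkey
  have hD : 0 ≤ D := by
    by_contra! h
    nlinarith [mul_nonneg hr.le (sq_nonneg (X ^ 2 - Y ^ 2)), mul_pos hS (neg_pos.mpr h)]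
  have hdisc : (X ^ 2 - Y ^ 2) ^ 2 ≤ (2 * ϑ - 1) * S * D := by
    refine le_of_mul_le_mul_left ?_ hr
    nlinarith [mul_le_mul_of_nonneg_right hrϑ (mul_nonneg hS.le hD)]
  have hR : 2 * ϑ * S - (D + S) ≤ 0 ∨
      (2 * ϑ * S - (D + S)) ^ 2 ≤ 4 * (ϑ * S - X ^ 2) * (ϑ * S - Y ^ 2) := by
    rcases le_or_gt D ((2 * ϑ - 1) * S) with hc | hc
    · right
      nlinarith [mul_le_mul_of_nonneg_right hc hD]
    · left
      linarith
  have h := quadratic_form_nonneg (by nlinarith) (by nlinarith) hτ₁ hτ₂ hR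
  have e : (X / Y) ^ r * X ^ 2 + Y ^ 2 / (X / Y) ^ r = D + S + r / 2 * (X - Y) ^ 2 := by
    rw [hD_def, rpowGap]; ring
  rw [e]
  linear_combination h

lemma rpow_add_one_mul_rpow_neg_mul_self {τ c : ℝ} (q : ℝ) (hτ : 0 < τ) (hc : 0 < c) :
    τ ^ (q + 1) * c ^ (-q) * c = τ ^ 2 * (c / τ) ^ (1 - q) := by
  calc τ ^ (q + 1) * c ^ (-q) * c = τ ^ ((2 : ℕ) - (1 - q) : ℝ) * c ^ (1 - q) := by
        rw [mul_assoc, ← rpow_add_one hc.ne']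
        ring_nf
    _ = τ ^ 2 * (c / τ) ^ (1 - q) := by
        rw [rpow_sub hτ, rpow_natCast, div_rpow hc.le hτ.le]
        ring

lemma rpow_div_rpow_pow_eq_div {x y s : ℝ} (hx : 0 < x) (hy : 0 < y) (hs : s ≠ 0) :
    (x ^ s / y ^ s) ^ (-s⁻¹) = y / x := by
  rw [← div_rpow hx.le hy.le, ← rpow_mul (div_nonneg hx.le hy.le), mul_neg, mul_inv_cancel₀ hs,
    rpow_neg_one, inv_div]

lemma rpow_half_sq {x : ℝ} (s : ℝ) (hx : 0 < x) : (x ^ (s / 2)) ^ 2 = x ^ s := by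
  rw [← rpow_natCast, ← rpow_mul hx.le]
  norm_num

lemma cutoff_ineq_of_eq_zero {c d τ ϑ : ℝ} (q : ℝ) (hc : 0 < c) (hd : 0 < d) (hτ : 0 < τ)
    (hϑ : 1 ≤ ϑ) : (c - d) * (τ ^ (q + 1) * c ^ (-q)) ≤ ϑ * τ ^ 2 * (c / τ) ^ (1 - q) := by
  rw [mul_assoc, ← rpow_add_one_mul_rpow_neg_mul_self q hτ hc]
  have : 0 ≤ τ ^ (q + 1) * c ^ (-q) := by positivity
  nlinarith [mul_nonneg (by nlinarith : 0 ≤ ϑ * c - c + d) this]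

lemma alg_ineq_cutoff_of_pos {q a b τ₁ τ₂ ϑ : ℝ} (hq : 1 < q) (ha : 0 < a) (hb : 0 < b)
    (h₁ : 0 < τ₁) (h₂ : 0 < τ₂) (hϑ : 1 ≤ ϑ) (hqϑ : (6 * q - 5) / 2 ≤ ϑ) :
    1 / (q - 1) * (τ₁ * τ₂) *
        ((b / τ₂) ^ ((1 - q) / 2) - (a / τ₁) ^ ((1 - q) / 2)) ^ 2 -
      ϑ * (τ₂ - τ₁) ^ 2 * ((b / τ₂) ^ (1 - q) + (a / τ₁) ^ (1 - q)) ≤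
    (b - a) * (τ₁ ^ (q + 1) * a ^ (-q) - τ₂ ^ (q + 1) * b ^ (-q)) := by
  have hx : 0 < a / τ₁ := div_pos ha h₁
  have hy : 0 < b / τ₂ := div_pos hb h₂
  have hs : (1 - q) / 2 ≠ 0 := by intro h; linarith
  have hr : -((1 - q) / 2)⁻¹ = 2 / (q - 1) := by
    rw [inv_div, ← div_neg, neg_sub]
  have hrϑ : 12 ≤ 2 / (q - 1) * (2 * ϑ - 1) := by
    rw [div_mul_eq_mul_div, le_div_iff₀ (by linarith)]
    linarith
  have hA := rpow_add_one_mul_rpow_neg_mul_self q h₁ ha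
  have hB := rpow_add_one_mul_rpow_neg_mul_self q h₂ hb
  rw [← rpow_half_sq (1 - q) hx] at hA ⊢
  rw [← rpow_half_sq (1 - q) hy] at hB ⊢
  have core := homogeneous_cutoff_ineq (by positivity) hϑ hrϑ h₁.le h₂.le
    (rpow_pos_of_pos hx ((1 - q) / 2)) (rpow_pos_of_pos hy ((1 - q) / 2))
  rw [← hr, rpow_div_rpow_pow_eq_div hx hy hs, hr] at core
  set X := (a / τ₁) ^ ((1 - q) / 2)
  set Y := (b / τ₂) ^ ((1 - q) / 2)
  have eA : τ₁ ^ (q + 1) * a ^ (-q) = τ₁ ^ 2 * X ^ 2 / a := by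
    rw [eq_div_iff ha.ne', hA]
  have eB : τ₂ ^ (q + 1) * b ^ (-q) = τ₂ ^ 2 * Y ^ 2 / b := by
    rw [eq_div_iff hb.ne', hB]
  have e : (b - a) * (τ₁ ^ 2 * X ^ 2 / a - τ₂ ^ 2 * Y ^ 2 / b) =
      τ₁ * τ₂ * (b / τ₂ / (a / τ₁) * X ^ 2 + Y ^ 2 / (b / τ₂ / (a / τ₁))) -
        τ₁ ^ 2 * X ^ 2 - τ₂ ^ 2 * Y ^ 2 := by
    field_simp
    ring
  rw [eA, eB, e]
  convert core using 3
  field_simp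

/-- **Algebraic inequality with cut-off factors, case `q > 1`** (Lemma 3.3(i)):
for `q > 1`, `a,b > 0`, `τ₁,τ₂ ≥ 0`, with `ϑ(q) = max(4,(6q−5)/2)`:
`(b−a)(τ₁^{q+1}a^{−q} − τ₂^{q+1}b^{−q}) ≥ (q−1)⁻¹ τ₁τ₂ ((b/τ₂)^{(1−q)/2} − (a/τ₁)^{(1−q)/2})²
 − ϑ(q)(τ₂−τ₁)²((b/τ₂)^{1−q} + (a/τ₁)^{1−q})`,
with the convention (as in Lean) that `x/0 = 0` and `0^p = 0` for `p ≠ 0`. -/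
theorem alg_ineq_cutoff_q_gt_one (q a b τ₁ τ₂ : ℝ) (hq : 1 < q)
    (ha : 0 < a) (hb : 0 < b) (hτ₁ : 0 ≤ τ₁) (hτ₂ : 0 ≤ τ₂) :
    1 / (q - 1) * (τ₁ * τ₂) *
        ((b / τ₂) ^ ((1 - q) / 2) - (a / τ₁) ^ ((1 - q) / 2)) ^ 2 -
      max 4 ((6 * q - 5) / 2) * (τ₂ - τ₁) ^ 2 *
        ((b / τ₂) ^ (1 - q) + (a / τ₁) ^ (1 - q)) ≤
    (b - a) * (τ₁ ^ (q + 1) * a ^ (-q) - τ₂ ^ (q + 1) * b ^ (-q)) := by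
  have hϑ : 1 ≤ max 4 ((6 * q - 5) / 2) := le_max_of_le_left (by norm_num)
  have hqϑ : (6 * q - 5) / 2 ≤ max 4 ((6 * q - 5) / 2) := le_max_right _ _
  have h0 : ∀ p : ℝ, p ≠ 0 → ∀ c : ℝ, (c / 0) ^ p = 0 := fun p hp c => by
    rw [div_zero, zero_rpow hp]
  have hs : (1 - q) / 2 ≠ 0 := by intro h; linarith
  have hs' : 1 - q ≠ 0 := by intro h; linarith
  have hq' : q + 1 ≠ 0 := by intro h; linarith
  obtain rfl | h₁ := hτ₁.eq_or_lt <;> obtain rfl | h₂ := hτ₂.eq_or_lt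
  · simp [zero_rpow hq']
  · simp only [h0 _ hs, h0 _ hs', zero_rpow hq']
    linarith [cutoff_ineq_of_eq_zero q hb ha h₂ hϑ]
  · simp only [h0 _ hs, h0 _ hs', zero_rpow hq']
    linarith [cutoff_ineq_of_eq_zero q ha hb h₁ hϑ]
  · exact alg_ineq_cutoff_of_pos hq ha hb h₁ h₂ hϑ hqϑ
end

section
/- Algebraic inequality with cut-off factors, case 0 < q < 1: Let q ∈ (0,1), a,b > 0 and τ₁,τ₂ ≥ 0. Set ζ(q) = 4q/(1−q), ζ₁(q) = ζ(q)/6 and ζ₂(q) = ζ(q) + 9/q. Then (b−a)( τ₁² a^{−q} − τ₂² b^{−q} ) ≥ ζ₁(q) ( τ₂ b^{(1−q)/2} − τ₁ a^{(1−q)/2} )² − ζ₂(q) (τ₂−τ₁)² ( b^{1−q} + a^{1−q} ). -/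
open Set Real

/-!
Put `t = 1 - q`, `X = a ^ (t / 2)`, `Y = b ^ (t / 2)`; by symmetry `a ≤ b`. Two estimates on powers
drive the proof. Cauchy–Schwarz, `(∫ₐᵇ 1)(∫ₐᵇ q s ^ (-q - 1)) ≥ (∫ₐᵇ √q s ^ (-(1 + q) / 2))²`, gives
`(b - a)(a ^ (-q) - b ^ (-q)) ≥ 4q (Y - X)² / t²`; Bernoulli's inequality for `(a / b) ^ (t / 2)`
gives `t (b - a) b ^ (-q) ≤ 2 (Y - X) Y`. Writing `τ₂ Y - τ₁ X = τ₁ (Y - X) + (τ₂ - τ₁) Y`, the cross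
term `2 τ₁ (τ₂ - τ₁) (b - a) b ^ (-q)` is absorbed by Young's inequality, and the constants
`ζ / 6` and `ζ + 9 / q` leave room for it.
-/

lemma rpow_div_two_sq {x : ℝ} (hx : 0 < x) (p : ℝ) : (x ^ (p / 2)) ^ 2 = x ^ p := by
  rw [← rpow_natCast, ← rpow_mul hx.le]; norm_num

lemma rpow_one_sub_div_two_sq {x : ℝ} (hx : 0 < x) (q : ℝ) :
    (x ^ ((1 - q) / 2)) ^ 2 = x * x ^ (-q) := by
  rw [rpow_div_two_sq hx, sub_eq_add_neg, rpow_add hx, rpow_one]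

/-- Cauchy–Schwarz without integrals: the integrand `(μ - s ^ (-(1 + q) / 2))² ≥ 0` has the
antiderivative `μ² s - s ^ (-q) / q - 4μ s ^ ((1 - q) / 2) / (1 - q)`. -/
lemma four_mul_div_mul_rpow_sub_le {q a b : ℝ} (hq₀ : q ≠ 0) (hq₁ : q ≠ 1) (ha : 0 < a)
    (hab : a ≤ b) (μ : ℝ) :
    4 * μ / (1 - q) * (b ^ ((1 - q) / 2) - a ^ ((1 - q) / 2)) ≤
      μ ^ 2 * (b - a) + (a ^ (-q) - b ^ (-q)) / q := by
  set G : ℝ → ℝ := fun s ↦ μ ^ 2 * s - s ^ (-q) / q - 4 * μ / (1 - q) * s ^ ((1 - q) / 2)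
  have hG : ∀ s ∈ Ioi (0 : ℝ), HasDerivAt G ((μ - s ^ (-(1 + q) / 2)) ^ 2) s := by
    intro s hs
    have hs₀ : s ≠ 0 := (mem_Ioi.1 hs).ne'
    refine (((hasDerivAt_id s).const_mul (μ ^ 2)).sub
      ((hasDerivAt_rpow_const (p := -q) (Or.inl hs₀)).div_const q)).sub
      ((hasDerivAt_rpow_const (p := (1 - q) / 2) (Or.inl hs₀)).const_mul (4 * μ / (1 - q)))
      |>.congr_deriv ?_
    have hq₁' : 1 - q ≠ 0 := sub_ne_zero.2 (Ne.symm hq₁)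
    rw [sub_sq, rpow_div_two_sq (mem_Ioi.1 hs), show (1 - q) / 2 - 1 = -(1 + q) / 2 by ring,
      show -q - 1 = -(1 + q) by ring]
    field_simp
    ring
  have hmono : MonotoneOn G (Ioi 0) :=
    monotoneOn_of_hasDerivWithinAt_nonneg (convex_Ioi 0)
      (fun s hs ↦ (hG s hs).continuousAt.continuousWithinAt)
      (fun s hs ↦ (hG s (interior_subset hs)).hasDerivWithinAt)
      (fun s _ ↦ sq_nonneg _)
  have hGab := hmono ha (ha.trans_le hab) hab
  linarith [show μ ^ 2 * (b - a) + (a ^ (-q) - b ^ (-q)) / q -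
      4 * μ / (1 - q) * (b ^ ((1 - q) / 2) - a ^ ((1 - q) / 2)) = G b - G a by simp only [G]; ring]

lemma four_mul_sq_rpow_sub_le {q a b : ℝ} (hq : 0 < q) (ha : 0 < a) (hb : 0 < b) :
    4 * q * (b ^ ((1 - q) / 2) - a ^ ((1 - q) / 2)) ^ 2 ≤
      (1 - q) ^ 2 * ((b - a) * (a ^ (-q) - b ^ (-q))) := by
  wlog hab : a ≤ b generalizing a b
  · linarith [this hb ha (le_of_not_ge hab)]
  rcases eq_or_ne q 1 with rfl | hq₁
  · simp
  have hdisc := discrim_le_zero fun μ ↦ by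
    have := four_mul_div_mul_rpow_sub_le hq.ne' hq₁ ha hab μ
    show 0 ≤ (b - a) * (μ * μ) + -(4 / (1 - q) * (b ^ ((1 - q) / 2) - a ^ ((1 - q) / 2))) * μ +
      (a ^ (-q) - b ^ (-q)) / q
    linear_combination this
  rw [discrim] at hdisc
  have hq₁' : 1 - q ≠ 0 := sub_ne_zero.2 (Ne.symm hq₁)
  have hscale : 4 * q * (b ^ ((1 - q) / 2) - a ^ ((1 - q) / 2)) ^ 2 -
      (1 - q) ^ 2 * ((b - a) * (a ^ (-q) - b ^ (-q))) =
      q * (1 - q) ^ 2 / 4 * ((-(4 / (1 - q) * (b ^ ((1 - q) / 2) - a ^ ((1 - q) / 2)))) ^ 2 -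
        4 * (b - a) * ((a ^ (-q) - b ^ (-q)) / q)) := by
    field_simp
  linarith [mul_nonpos_of_nonneg_of_nonpos (by positivity : 0 ≤ q * (1 - q) ^ 2 / 4) hdisc]

lemma one_sub_mul_sub_mul_rpow_neg_le {q a b : ℝ} (hq₀ : -1 ≤ q) (hq₁ : q ≤ 1) (ha : 0 ≤ a)
    (hb : 0 < b) :
    (1 - q) * ((b - a) * b ^ (-q)) ≤
      2 * (b ^ ((1 - q) / 2) - a ^ ((1 - q) / 2)) * b ^ ((1 - q) / 2) := by
  have hY : 0 < b ^ ((1 - q) / 2) := rpow_pos_of_pos hb _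
  have hbernoulli := rpow_one_add_le_one_add_mul_self (s := a / b - 1)
    (by linarith [div_nonneg ha hb.le]) (p := (1 - q) / 2) (by linarith) (by linarith)
  rw [add_sub_cancel, div_rpow ha hb.le, div_le_iff₀ hY] at hbernoulli
  have h2Y := mul_le_mul_of_nonneg_left hbernoulli (by positivity : 0 ≤ 2 * b ^ ((1 - q) / 2))
  linear_combination h2Y + (1 - q) * (a / b - 1) * rpow_one_sub_div_two_sq hb q +
    (1 - q) * b ^ (-q) * div_mul_cancel₀ a hb.ne'

lemma cutoff_ineq_of_bounds {q X Y D E τ₁ τ₂ : ℝ} (hq : q ∈ Ioo (0 : ℝ) 1) (hτ₁ : 0 ≤ τ₁)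
    (hτ₂ : 0 ≤ τ₂) (hD : 4 * q * (Y - X) ^ 2 ≤ (1 - q) ^ 2 * D)
    (hEX : (1 - q) * E ≤ 2 * (Y - X) * Y) (hE₀ : 0 ≤ E) (hEY : E ≤ Y ^ 2) :
    4 * q / (1 - q) / 6 * (τ₂ * Y - τ₁ * X) ^ 2 -
        (4 * q / (1 - q) + 9 / q) * (τ₂ - τ₁) ^ 2 * (Y ^ 2 + X ^ 2) ≤
      τ₁ ^ 2 * D - (τ₂ ^ 2 - τ₁ ^ 2) * E := by
  obtain ⟨hq₀, hq₁⟩ := hq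
  have ht : 0 < 1 - q := by linarith
  have hupper : 4 * q / (1 - q) / 6 * (τ₂ * Y - τ₁ * X) ^ 2 -
      (4 * q / (1 - q) + 9 / q) * (τ₂ - τ₁) ^ 2 * (Y ^ 2 + X ^ 2) ≤
      4 * q / (1 - q) / 3 * (τ₁ * (Y - X)) ^ 2 -
        (4 * q / (1 - q) * (2 / 3) + 9 / q) * ((τ₂ - τ₁) * Y) ^ 2 := by
    rw [show τ₂ * Y - τ₁ * X = τ₁ * (Y - X) + (τ₂ - τ₁) * Y by ring]
    have hsq := sq_nonneg (τ₁ * (Y - X) - (τ₂ - τ₁) * Y)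
    have hX : 0 ≤ (4 * q / (1 - q) + 9 / q) * ((τ₂ - τ₁) * X) ^ 2 := by positivity
    have hζ : 0 ≤ 4 * q / (1 - q) := by positivity
    nlinarith
  have hlower : 2 * q / (1 - q) ^ 2 * (τ₁ * (Y - X)) ^ 2 - (2 / q + 1) * ((τ₂ - τ₁) * Y) ^ 2 ≤
      τ₁ ^ 2 * D - (τ₂ ^ 2 - τ₁ ^ 2) * E := by
    have hD' : 4 * q / (1 - q) ^ 2 * (τ₁ * (Y - X)) ^ 2 ≤ τ₁ ^ 2 * D := by
      rw [div_mul_eq_mul_div, div_le_iff₀ (by positivity)]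
      nlinarith [mul_le_mul_of_nonneg_left hD (sq_nonneg τ₁)]
    have hZ : 0 ≤ 2 * q / (1 - q) ^ 2 * (τ₁ * (Y - X)) ^ 2 := by positivity
    rcases le_or_gt τ₂ τ₁ with hτ | hτ
    · have hE : (τ₂ ^ 2 - τ₁ ^ 2) * E ≤ 0 :=
        mul_nonpos_of_nonpos_of_nonneg (by nlinarith) hE₀
      have hW : 0 ≤ (2 / q + 1) * ((τ₂ - τ₁) * Y) ^ 2 := by positivity
      linear_combination hD' + hE + hZ + hW
    · have hE : (τ₂ ^ 2 - τ₁ ^ 2) * E ≤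
          4 / (1 - q) * (τ₁ * (Y - X)) * ((τ₂ - τ₁) * Y) + ((τ₂ - τ₁) * Y) ^ 2 := by
        have hE' : E ≤ 2 * (Y - X) * Y / (1 - q) := by rw [le_div_iff₀ ht]; linarith
        calc (τ₂ ^ 2 - τ₁ ^ 2) * E = 2 * (τ₁ * (τ₂ - τ₁)) * E + (τ₂ - τ₁) ^ 2 * E := by ring
          _ ≤ 2 * (τ₁ * (τ₂ - τ₁)) * (2 * (Y - X) * Y / (1 - q)) + (τ₂ - τ₁) ^ 2 * Y ^ 2 := by
            have : 0 ≤ τ₁ * (τ₂ - τ₁) := mul_nonneg hτ₁ (by linarith)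
            gcongr
          _ = 4 / (1 - q) * (τ₁ * (Y - X)) * ((τ₂ - τ₁) * Y) + ((τ₂ - τ₁) * Y) ^ 2 := by ring
      have hAMGM : 2 * q / (1 - q) ^ 2 * (τ₁ * (Y - X)) ^ 2 + 2 / q * ((τ₂ - τ₁) * Y) ^ 2 -
          4 / (1 - q) * (τ₁ * (Y - X)) * ((τ₂ - τ₁) * Y) =
          2 / q * (q / (1 - q) * (τ₁ * (Y - X)) - (τ₂ - τ₁) * Y) ^ 2 := by
        field_simp
        ring
      have hS : 0 ≤ 2 / q * (q / (1 - q) * (τ₁ * (Y - X)) - (τ₂ - τ₁) * Y) ^ 2 := by positivity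
      linear_combination hD' + hE + hS - hAMGM
  have hcoef₁ : 4 * q / (1 - q) / 3 ≤ 2 * q / (1 - q) ^ 2 := by
    rw [div_div, div_le_div_iff₀ (by positivity) (by positivity)]
    nlinarith [mul_pos hq₀ ht]
  have hcoef₂ : 2 / q + 1 ≤ 4 * q / (1 - q) * (2 / 3) + 9 / q := by
    have h₇ : 1 < 7 / q := by rw [lt_div_iff₀ hq₀]; linarith
    have hζ : 0 ≤ 4 * q / (1 - q) := by positivity
    linear_combination h₇ + 2 / 3 * hζ
  calc _ ≤ _ := hupper
    _ ≤ 2 * q / (1 - q) ^ 2 * (τ₁ * (Y - X)) ^ 2 - (2 / q + 1) * ((τ₂ - τ₁) * Y) ^ 2 :=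
      sub_le_sub (mul_le_mul_of_nonneg_right hcoef₁ (sq_nonneg _))
        (mul_le_mul_of_nonneg_right hcoef₂ (sq_nonneg _))
    _ ≤ _ := hlower

/-- **Algebraic inequality with cut-off factors, case `0 < q < 1`** (Lemma 3.3(ii)):
for `q ∈ (0,1)`, `a,b > 0`, `τ₁,τ₂ ≥ 0`, with `ζ(q) = 4q/(1−q)`, `ζ₁(q) = ζ(q)/6`,
`ζ₂(q) = ζ(q) + 9/q`:
`(b−a)(τ₁²a^{−q} − τ₂²b^{−q}) ≥ ζ₁(q)(τ₂b^{(1−q)/2} − τ₁a^{(1−q)/2})²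
 − ζ₂(q)(τ₂−τ₁)²(b^{1−q} + a^{1−q})`. -/
theorem alg_ineq_cutoff_q_lt_one (q a b τ₁ τ₂ : ℝ) (hq : q ∈ Ioo (0:ℝ) 1)
    (ha : 0 < a) (hb : 0 < b) (hτ₁ : 0 ≤ τ₁) (hτ₂ : 0 ≤ τ₂) :
    4 * q / (1 - q) / 6 * (τ₂ * b ^ ((1 - q) / 2) - τ₁ * a ^ ((1 - q) / 2)) ^ 2 -
      (4 * q / (1 - q) + 9 / q) * (τ₂ - τ₁) ^ 2 * (b ^ (1 - q) + a ^ (1 - q)) ≤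
    (b - a) * (τ₁ ^ 2 * a ^ (-q) - τ₂ ^ 2 * b ^ (-q)) := by
  wlog hab : a ≤ b generalizing a b τ₁ τ₂
  · linarith [this b a τ₂ τ₁ hb ha hτ₂ hτ₁ (le_of_not_ge hab)]
  have hE₀ : 0 ≤ (b - a) * b ^ (-q) := mul_nonneg (by linarith) (rpow_nonneg hb.le _)
  have hEY : (b - a) * b ^ (-q) ≤ (b ^ ((1 - q) / 2)) ^ 2 := by
    rw [rpow_one_sub_div_two_sq hb]; exact mul_le_mul_of_nonneg_right (by linarith) (rpow_nonneg hb.le _)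
  have h := cutoff_ineq_of_bounds hq hτ₁ hτ₂ (four_mul_sq_rpow_sub_le hq.1 ha hb)
    (one_sub_mul_sub_mul_rpow_neg_le (by linarith [hq.1]) hq.2.le ha.le hb) hE₀ hEY
  rw [rpow_div_two_sq hb, rpow_div_two_sq ha] at h
  linear_combination h
end

section
/- Reformulated algebraic inequality: Let q ∈ (0,1), set ζ(q) = 4q/(1−q), ζ₁(q) = ζ(q)/6, ζ₂(q) = ζ(q) + 9/q. Then for all t ≥ 1 and s > 0, with λ = s² t^{−q}: ζ₁(q) ( √(λt) − 1 )² ≤ (t−1)(1−λ) + ζ₂(q)(s−1)²( t^{1−q} + 1 ). -/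
/-!
Write `g = t^((1-q)/2)` and `P = t^(-q)`, so that `√(λt) = s g` and `t P = g²`. Splitting
`s g - 1 = g (s - 1) + (g - 1)` reduces the inequality to two one-variable facts: Bernoulli's
`q (t - 1) ≤ t (1 - P)`, which also lets AM-GM absorb the cross term `2 (t - 1) P (s - 1)`,
and `ζ(q) (g - 1)² ≤ (t - 1)(1 - P)`. With `t = eˣ`, `a = (1-q)x/2`, `b = (1+q)x/2` the latter
becomes `4q (cosh a - 1) ≤ (1 - q)(cosh b - cosh a)`; since `(1 - q)(b - a) = 2qa`, it follows
from the tangent line of `cosh` at `a` and from `2 (cosh a - 1) ≤ a sinh a`, i.e. `tanh y ≤ y`.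
-/

open Set

namespace Real

theorem sinh_le_mul_cosh {y : ℝ} (hy : 0 ≤ y) : sinh y ≤ y * cosh y := by
  have hderiv (z : ℝ) : HasDerivAt (fun z ↦ z * cosh z - sinh z) (z * sinh z) z := by
    refine (((hasDerivAt_id z).mul (hasDerivAt_cosh z)).sub
      (hasDerivAt_sinh z)).congr_deriv ?_
    simp only [id, one_mul, add_sub_cancel_left]
  have hnonneg (z : ℝ) : 0 ≤ z * sinh z := by
    rcases le_total 0 z with hz | hz
    · exact mul_nonneg hz (sinh_nonneg_iff.2 hz)
    · exact mul_nonneg_of_nonpos_of_nonpos hz (sinh_nonpos_iff.2 hz)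
  have := monotone_of_hasDerivAt_nonneg hderiv hnonneg hy
  simp only [zero_mul, sinh_zero, sub_zero] at this
  linarith

theorem two_mul_cosh_sub_one_le_mul_sinh {a : ℝ} (ha : 0 ≤ a) :
    2 * (cosh a - 1) ≤ a * sinh a := by
  obtain ⟨y, rfl⟩ : ∃ y, a = 2 * y := ⟨a / 2, by ring⟩
  have hy : 0 ≤ y := by linarith
  rw [cosh_two_mul, sinh_two_mul, cosh_sq]
  nlinarith [sinh_le_mul_cosh hy, sinh_nonneg_iff.2 hy]

theorem sub_mul_sinh_le_cosh_sub_cosh (a b : ℝ) :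
    (b - a) * sinh a ≤ cosh b - cosh a := by
  have h₁ := add_one_le_exp (b - a)
  have h₂ := add_one_le_exp (-(b - a))
  have hb : exp b = exp a * exp (b - a) := by rw [← exp_add]; ring_nf
  have hb' : exp (-b) = exp (-a) * exp (-(b - a)) := by rw [← exp_add]; ring_nf
  rw [cosh_eq, cosh_eq, sinh_eq, hb, hb']
  nlinarith [exp_pos a, exp_pos (-a)]

end Real

open Real

theorem mul_cosh_sub_one_le_cosh_sub_cosh {q x : ℝ} (hq₀ : 0 ≤ q) (hq₁ : q ≤ 1)
    (hx : 0 ≤ x) :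
    4 * q * (cosh ((1 - q) * x / 2) - 1) ≤
      (1 - q) * (cosh ((1 + q) * x / 2) - cosh ((1 - q) * x / 2)) := by
  set a := (1 - q) * x / 2
  have ha : 0 ≤ a := by positivity
  calc 4 * q * (cosh a - 1) ≤ 2 * q * (a * sinh a) := by
        nlinarith [two_mul_cosh_sub_one_le_mul_sinh ha]
    _ = (1 - q) * (((1 + q) * x / 2 - a) * sinh a) := by ring
    _ ≤ (1 - q) * (cosh ((1 + q) * x / 2) - cosh a) :=
        mul_le_mul_of_nonneg_left (sub_mul_sinh_le_cosh_sub_cosh _ _) (by linarith)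

theorem mul_rpow_sub_one_sq_le {q t : ℝ} (hq₀ : 0 ≤ q) (hq₁ : q < 1) (ht : 1 ≤ t) :
    4 * q / (1 - q) * (t ^ ((1 - q) / 2) - 1) ^ 2 ≤ (t - 1) * (1 - t ^ (-q)) := by
  obtain ⟨x, hx, rfl⟩ : ∃ x, 0 ≤ x ∧ t = exp x :=
    ⟨log t, log_nonneg ht, (exp_log (by linarith)).symm⟩
  have hg_eq : exp x ^ ((1 - q) / 2) = exp ((1 - q) * x / 2) := by
    rw [← exp_mul]; ring_nf
  have hx_eq : exp x = exp ((1 - q) * x / 2) * exp ((1 + q) * x / 2) := by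
    rw [← exp_add]; ring_nf
  have hP_eq : exp x ^ (-q) = exp ((1 - q) * x / 2) * exp (-((1 + q) * x / 2)) := by
    rw [← exp_mul, ← exp_add]; ring_nf
  have ha_inv := exp_add ((1 - q) * x / 2) (-((1 - q) * x / 2))
  have hb_inv := exp_add ((1 + q) * x / 2) (-((1 + q) * x / 2))
  rw [add_neg_cancel, exp_zero] at ha_inv hb_inv
  have key := mul_le_mul_of_nonneg_left (mul_cosh_sub_one_le_cosh_sub_cosh hq₀ hq₁.le hx)
    (by positivity : 0 ≤ 2 * exp ((1 - q) * x / 2))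
  rw [cosh_eq, cosh_eq] at key
  rw [div_mul_eq_mul_div, div_le_iff₀ (by linarith), hg_eq, hP_eq, hx_eq]
  -- the goal is `key` rewritten with `e^a e^(-a) = e^b e^(-b) = 1`
  linear_combination key + (1 + 3 * q) * ha_inv - (1 - q) * exp ((1 - q) * x / 2) ^ 2 * hb_inv

theorem mul_sub_one_le_mul_one_sub_rpow_neg {q t : ℝ} (hq₀ : 0 ≤ q) (hq₁ : q ≤ 1)
    (ht : 0 < t) :
    q * (t - 1) ≤ t * (1 - t ^ (-q)) := by
  have h := rpow_one_add_le_one_add_mul_self (s := t - 1) (by linarith) (p := 1 - q)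
    (by linarith) (by linarith)
  rw [add_sub_cancel, sub_eq_add_neg, rpow_add ht, rpow_one] at h
  linarith

section

variable {q t P g s : ℝ}

theorem two_mul_cross_term_le (hq : 0 < q) (ht : 1 ≤ t) (hP₁ : P ≤ 1)
    (htP : t * P = g ^ 2) (hbern : q * (t - 1) ≤ t * (1 - P)) :
    2 * ((t - 1) * P * (s - 1)) ≤ (t - 1) * (1 - P) / 2 + 2 / q * g ^ 2 * (s - 1) ^ 2 := by
  have hamgm : 4 * q * t * ((t - 1) * P * (s - 1)) ≤
      (q * (t - 1)) ^ 2 + 4 * (t * P) ^ 2 * (s - 1) ^ 2 := by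
    nlinarith [sq_nonneg (q * (t - 1) - 2 * (t * P) * (s - 1))]
  have hfirst : (q * (t - 1)) ^ 2 ≤ q * t * ((t - 1) * (1 - P)) := by
    nlinarith [mul_le_mul_of_nonneg_left hbern (by nlinarith : 0 ≤ q * (t - 1))]
  have hsecond : (t * P) ^ 2 * (s - 1) ^ 2 ≤ t * g ^ 2 * (s - 1) ^ 2 := by
    have h := mul_le_mul_of_nonneg_left hP₁
      (by positivity : 0 ≤ t * g ^ 2 * (s - 1) ^ 2)
    rw [← htP] at h ⊢
    linarith
  have hdiv : q * t * (2 / q * g ^ 2 * (s - 1) ^ 2) = 2 * (t * g ^ 2 * (s - 1) ^ 2) := by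
    field_simp
  refine le_of_mul_le_mul_left ?_ (by positivity : 0 < 2 * q * t)
  linarith

theorem div_six_mul_sq_le_of_bernoulli (hq₀ : 0 < q) (hq₁ : q ≤ 1) {ζ : ℝ} (hζ : 0 ≤ ζ)
    (ht : 1 ≤ t) (hP : 0 ≤ P) (htP : t * P = g ^ 2) (hbern : q * (t - 1) ≤ t * (1 - P))
    (hclaim : ζ * (g - 1) ^ 2 ≤ (t - 1) * (1 - P)) :
    ζ / 6 * (s * g - 1) ^ 2 ≤
      (t - 1) * (1 - s ^ 2 * P) + (ζ + 9 / q) * (s - 1) ^ 2 * (g ^ 2 + 1) := by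
  have hP₁ : P ≤ 1 := by nlinarith
  have hcross := two_mul_cross_term_le (s := s) hq₀ ht hP₁ htP hbern
  have hsplit : (s * g - 1) ^ 2 ≤ 2 * (g ^ 2 * (s - 1) ^ 2) + 2 * (g - 1) ^ 2 := by
    nlinarith [sq_nonneg (g * (s - 1) - (g - 1))]
  have hdiag : (t - 1) * P * (s - 1) ^ 2 ≤ g ^ 2 * (s - 1) ^ 2 := by
    gcongr
    linarith
  have hcoef : 1 + 2 / q ≤ 9 / q := by
    have h := (one_le_div hq₀).2 (by linarith : q ≤ 7)
    linarith [show 9 / q = 7 / q + 2 / q by ring]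
  have hD : 0 ≤ (s - 1) ^ 2 := sq_nonneg _
  have hA : 0 ≤ (t - 1) * (1 - P) := le_trans (by positivity) hclaim
  have hexpand : (t - 1) * (1 - s ^ 2 * P) =
      (t - 1) * (1 - P) - (t - 1) * P * (s - 1) ^ 2 - 2 * ((t - 1) * P * (s - 1)) := by ring
  calc ζ / 6 * (s * g - 1) ^ 2
      ≤ ζ / 3 * (g ^ 2 * (s - 1) ^ 2) + ζ * (g - 1) ^ 2 / 3 := by nlinarith
    _ ≤ ζ / 3 * (g ^ 2 * (s - 1) ^ 2) + (t - 1) * (1 - P) / 3 := by linarith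
    _ ≤ (t - 1) * (1 - P) / 2 - (1 + 2 / q) * (g ^ 2 * (s - 1) ^ 2) +
          (ζ + 9 / q) * (s - 1) ^ 2 * (g ^ 2 + 1) := by
        nlinarith [mul_le_mul_of_nonneg_right hcoef (mul_nonneg (sq_nonneg g) hD),
          mul_nonneg hζ hD, mul_nonneg hζ (mul_nonneg (sq_nonneg g) hD),
          mul_nonneg (div_nonneg (by norm_num : (0:ℝ) ≤ 9) hq₀.le) hD]
    _ ≤ (t - 1) * (1 - s ^ 2 * P) + (ζ + 9 / q) * (s - 1) ^ 2 * (g ^ 2 + 1) := by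
        linarith

end

/-- **Reformulated algebraic inequality** (inequality (3.5) in the proof of Lemma 3.3(ii)):
for `q ∈ (0,1)`, `t ≥ 1`, `s > 0` and `λ = s² t^{−q}`:
`ζ₁(q)(√(λt) − 1)² ≤ (t−1)(1−λ) + ζ₂(q)(s−1)²(t^{1−q}+1)`,
where `ζ(q) = 4q/(1−q)`, `ζ₁(q) = ζ(q)/6`, `ζ₂(q) = ζ(q) + 9/q`. -/
theorem alg_ineq_reformulated (q t s : ℝ) (hq : q ∈ Ioo (0:ℝ) 1) (ht : 1 ≤ t) (hs : 0 < s) :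
    4 * q / (1 - q) / 6 * (Real.sqrt (s ^ 2 * t ^ (-q) * t) - 1) ^ 2 ≤
      (t - 1) * (1 - s ^ 2 * t ^ (-q)) +
        (4 * q / (1 - q) + 9 / q) * (s - 1) ^ 2 * (t ^ (1 - q) + 1) := by
  obtain ⟨hq₀, hq₁⟩ := hq
  have ht₀ : 0 < t := by linarith
  have hg_sq : t ^ (1 - q) = (t ^ ((1 - q) / 2)) ^ 2 := by
    rw [← rpow_mul_natCast ht₀.le]; norm_num
  have htP : t * t ^ (-q) = (t ^ ((1 - q) / 2)) ^ 2 := by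
    rw [← hg_sq, sub_eq_add_neg, rpow_add ht₀, rpow_one]
  have hsqrt : √(s ^ 2 * t ^ (-q) * t) = s * t ^ ((1 - q) / 2) := by
    rw [← sqrt_sq (by positivity : 0 ≤ s * t ^ ((1 - q) / 2)), mul_pow, ← htP]
    ring_nf
  rw [hsqrt, hg_sq]
  exact div_six_mul_sq_le_of_bernoulli hq₀ hq₁.le (div_nonneg (by linarith) (by linarith)) ht
    (rpow_nonneg ht₀.le _) htP (mul_sub_one_le_mul_one_sub_rpow_neg hq₀.le hq₁.le ht₀)
    (mul_rpow_sub_one_sq_le hq₀.le hq₁ ht)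
end

section
/- Logarithmic computation rule for the nonlocal form: Let k_t : ℝ^d × ℝ^d → [0,∞) be measurable and symmetric for each t in an interval I, and let ψ : ℝ^d → [0,∞) be continuous with support equal to the closed ball cl(B_R) for some R > 0, ψ > 0 on B_R, and sup_{t∈I} E_t(ψ,ψ) < ∞. Then for every function w : I × ℝ^d → [0,∞) with w(t,·) > 0 on B_R, and for every t ∈ I at which all the integrals below are finite: E_t(w, −ψ² w⁻¹) ≥ ∬_{B_R × B_R} ψ(x)ψ(y) ( log(w(t,y)/ψ(y)) − log(w(t,x)/ψ(x)) )² k_t(x,y) dx dy − 3 E_t(ψ,ψ). -/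
/-!
For `r = w(y) ψ(x) / (w(x) ψ(y))` the elementary inequality `log² r ≤ r + r⁻¹ - 2`
(that is, `u² ≤ 4 sinh² (u / 2)`), multiplied by `ψ(x) ψ(y)`, bounds the logarithmic integrand
on `B_R × B_R` by the integrand of `E_t(w, -ψ² w⁻¹)` plus `(ψ(y) - ψ(x))²`. Off `B_R × B_R`
one of `ψ(x)`, `ψ(y)` vanishes, since a continuous function with closed support `cl(B_R)` vanishes
on the sphere, and the same right-hand side is then nonnegative. Integrate against `k_t ≥ 0`.
-/

open MeasureTheory Real Set Metric

noncomputable section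

abbrev Ed (d : ℕ) : Type := EuclideanSpace ℝ (Fin d)

lemma Real.sq_le_sinh_sq (x : ℝ) : x ^ 2 ≤ sinh x ^ 2 := by
  rcases le_total 0 x with h | h
  · nlinarith [self_le_sinh_iff.2 h]
  · nlinarith [sinh_le_self_iff.2 h]

lemma Real.log_sq_le_add_inv_sub_two {r : ℝ} (hr : 0 < r) : log r ^ 2 ≤ r + r⁻¹ - 2 := by
  have hsq : ∀ u : ℝ, exp (u / 2) ^ 2 = exp u := fun u => by rw [← exp_nat_mul]; ring_nf
  have key : 4 * sinh (log r / 2) ^ 2 = r + r⁻¹ - 2 := by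
    rw [sinh_eq, div_pow, sub_sq, mul_assoc, ← exp_add, add_neg_cancel, exp_zero, ← neg_div, hsq,
      hsq, exp_neg, exp_log hr]
    ring_nf
  nlinarith [sq_le_sinh_sq (log r / 2)]

lemma mul_mul_log_div_sub_log_div_sq_le {a b p q : ℝ} (ha : 0 < a) (hb : 0 < b) (hp : 0 < p)
    (hq : 0 < q) :
    p * q * (log (b / q) - log (a / p)) ^ 2 ≤ (b - a) * (p ^ 2 / a - q ^ 2 / b) + (q - p) ^ 2 := by
  have hlog : log (b / q) - log (a / p) = log (b * p / (a * q)) := by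
    rw [← log_div (by positivity) (by positivity)]
    congr 1
    field_simp
  have hid : p * q * (b * p / (a * q) + (b * p / (a * q))⁻¹ - 2)
      = (b - a) * (p ^ 2 / a - q ^ 2 / b) + (q - p) ^ 2 := by
    field_simp
    ring
  rw [hlog, ← hid]
  exact mul_le_mul_of_nonneg_left (log_sq_le_add_inv_sub_two (by positivity)) (by positivity)

-- Also when `a` or `b` vanishes, thanks to `x / 0 = 0`.
lemma sub_mul_div_sub_div_add_sq_nonneg {a b p q : ℝ} (ha : 0 ≤ a) (hb : 0 ≤ b)
    (hpq : p = 0 ∨ q = 0) : 0 ≤ (b - a) * (p ^ 2 / a - q ^ 2 / b) + (q - p) ^ 2 := by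
  rcases hpq with rfl | rfl
  · rcases hb.eq_or_lt with rfl | hb
    · simp [sq_nonneg]
    · have : (b - a) * (0 ^ 2 / a - q ^ 2 / b) + (q - 0) ^ 2 = a * q ^ 2 / b := by
        field_simp; ring
      rw [this]; positivity
  · rcases ha.eq_or_lt with rfl | ha
    · simp [sq_nonneg]
    · have : (b - a) * (p ^ 2 / a - 0 ^ 2 / b) + (0 - p) ^ 2 = b * p ^ 2 / a := by
        field_simp; ring
      rw [this]; positivity

lemma Continuous.support_subset_ball_of_tsupport_eq_closedBall {E : Type*}
    [NormedAddCommGroup E] [NormedSpace ℝ E] {f : E → ℝ} (hf : Continuous f) {c : E} {R : ℝ}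
    (hR : R ≠ 0) (hsupp : tsupport f = closedBall c R) : Function.support f ⊆ ball c R := by
  rw [← interior_closedBall c hR, ← hsupp]
  exact interior_maximal (subset_tsupport f) hf.isOpen_support

lemma indicator_log_integrand_le {α : Type*} {s : Set α} {ψ w : α → ℝ} {k : α → α → ℝ}
    (hk : ∀ x y, 0 ≤ k x y) (hw : ∀ x, 0 ≤ w x) (hw_pos : ∀ x ∈ s, 0 < w x)
    (hψ_pos : ∀ x ∈ s, 0 < ψ x) (hψ_supp : Function.support ψ ⊆ s) (z : α × α) :
    (s ×ˢ s).indicator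
        (fun z => ψ z.1 * ψ z.2 * (log (w z.2 / ψ z.2) - log (w z.1 / ψ z.1)) ^ 2 * k z.1 z.2) z ≤
      (w z.2 - w z.1) * (ψ z.1 ^ 2 / w z.1 - ψ z.2 ^ 2 / w z.2) * k z.1 z.2 +
        3 * ((ψ z.2 - ψ z.1) ^ 2 * k z.1 z.2) := by
  obtain ⟨x, y⟩ := z
  have hk := hk x y
  have hψ_sq_le : (ψ y - ψ x) ^ 2 * k x y ≤ 3 * ((ψ y - ψ x) ^ 2 * k x y) := by
    nlinarith [mul_nonneg (sq_nonneg (ψ y - ψ x)) hk]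
  by_cases hxy : (x, y) ∈ s ×ˢ s
  · rw [indicator_of_mem hxy]
    obtain ⟨hx, hy⟩ := hxy
    calc _ ≤ ((w y - w x) * (ψ x ^ 2 / w x - ψ y ^ 2 / w y) + (ψ y - ψ x) ^ 2) * k x y :=
          mul_le_mul_of_nonneg_right (mul_mul_log_div_sub_log_div_sq_le (hw_pos x hx)
            (hw_pos y hy) (hψ_pos x hx) (hψ_pos y hy)) hk
      _ ≤ _ := by linarith
  · rw [indicator_of_notMem hxy]
    have hψ_zero : ψ x = 0 ∨ ψ y = 0 := by
      by_contra! h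
      exact hxy ⟨hψ_supp h.1, hψ_supp h.2⟩
    calc (0 : ℝ) ≤ ((w y - w x) * (ψ x ^ 2 / w x - ψ y ^ 2 / w y) + (ψ y - ψ x) ^ 2) * k x y :=
          mul_nonneg (sub_mul_div_sub_div_add_sq_nonneg (hw x) (hw y) hψ_zero) hk
      _ ≤ _ := by linarith


theorem log_computation_rule_general (d : ℕ) (R : ℝ) (hR : 0 < R) (I : Set ℝ)
    (k : ℝ → Ed d → Ed d → ℝ)
    (hk_nonneg : ∀ t x y, 0 ≤ k t x y)
    (ψ : Ed d → ℝ) (hψ_cont : Continuous ψ)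
    (hψ_supp : tsupport ψ = closedBall (0 : Ed d) R)
    (hψ_pos : ∀ x ∈ ball (0 : Ed d) R, 0 < ψ x)
    (hψ_energy : ∃ M : ℝ, ∀ t ∈ I,
      Integrable (fun p : Ed d × Ed d => (ψ p.2 - ψ p.1) ^ 2 * k t p.1 p.2) ∧
      (∫ x, ∫ y, (ψ y - ψ x) ^ 2 * k t x y) ≤ M)
    (w : ℝ → Ed d → ℝ)
    (hw_nonneg : ∀ t ∈ I, ∀ x, 0 ≤ w t x)
    (hw_pos : ∀ t ∈ I, ∀ x ∈ ball (0 : Ed d) R, 0 < w t x)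
    (t : ℝ) (ht : t ∈ I)
    (hint₁ : Integrable (fun p : Ed d × Ed d =>
      (w t p.2 - w t p.1) * (ψ p.1 ^ 2 / w t p.1 - ψ p.2 ^ 2 / w t p.2) * k t p.1 p.2))
    (hint₂ : IntegrableOn (fun p : Ed d × Ed d =>
      ψ p.1 * ψ p.2 * (Real.log (w t p.2 / ψ p.2) - Real.log (w t p.1 / ψ p.1)) ^ 2 *
        k t p.1 p.2) (ball (0 : Ed d) R ×ˢ ball (0 : Ed d) R)) :
    (∫ x in ball (0 : Ed d) R, ∫ y in ball (0 : Ed d) R,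
        ψ x * ψ y * (Real.log (w t y / ψ y) - Real.log (w t x / ψ x)) ^ 2 * k t x y)
      - 3 * (∫ x, ∫ y, (ψ y - ψ x) ^ 2 * k t x y) ≤
    ∫ x, ∫ y, (w t y - w t x) * (ψ x ^ 2 / w t x - ψ y ^ 2 / w t y) * k t x y := by
  obtain ⟨M, hM⟩ := hψ_energy
  have hint₃ := (hM t ht).1
  have hB : MeasurableSet (ball (0 : Ed d) R ×ˢ ball (0 : Ed d) R) :=
    measurableSet_ball.prod measurableSet_ball
  rw [← setIntegral_prod _ hint₂, ← integral_prod _ hint₃, ← integral_prod _ hint₁,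
    ← integral_indicator hB, ← Measure.volume_eq_prod, sub_le_iff_le_add, ← integral_const_mul,
    ← integral_add hint₁ (hint₃.const_mul 3)]
  exact integral_mono ((integrable_indicator_iff hB).2 hint₂) (hint₁.add (hint₃.const_mul 3))
    (indicator_log_integrand_le (hk_nonneg t) (hw_nonneg t ht) (hw_pos t ht) hψ_pos
      (hψ_cont.support_subset_ball_of_tsupport_eq_closedBall hR.ne' hψ_supp))

/-- **Logarithmic computation rule for the nonlocal form** (Lemma 4.1): writing
`E_t(u,v) = ∬ (u(t,y)−u(t,x))(v(t,y)−v(t,x)) k_t(x,y)`, for a measurable symmetric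
nonnegative kernel, a continuous nonnegative `ψ` with support `cl(B_R)` and positive on
`B_R`, with `sup_{t∈I} E_t(ψ,ψ) < ∞`, and `w ≥ 0` with `w(t,·) > 0` on `B_R`:
`E_t(w, −ψ²w⁻¹) ≥ ∬_{B_R×B_R} ψ(x)ψ(y)(log(w(t,y)/ψ(y)) − log(w(t,x)/ψ(x)))² k_t(x,y)
 − 3 E_t(ψ,ψ)` at every `t ∈ I` where all the integrals involved are finite. -/
theorem log_computation_rule (d : ℕ) (R : ℝ) (hR : 0 < R) (I : Set ℝ)
    (k : ℝ → Ed d → Ed d → ℝ)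
    (hk_meas : ∀ t, Measurable (Function.uncurry (k t)))
    (hk_symm : ∀ t x y, k t x y = k t y x)
    (hk_nonneg : ∀ t x y, 0 ≤ k t x y)
    (ψ : Ed d → ℝ) (hψ_cont : Continuous ψ) (hψ_nonneg : ∀ x, 0 ≤ ψ x)
    (hψ_supp : tsupport ψ = closedBall (0 : Ed d) R)
    (hψ_pos : ∀ x ∈ ball (0 : Ed d) R, 0 < ψ x)
    (hψ_energy : ∃ M : ℝ, ∀ t ∈ I,
      Integrable (fun p : Ed d × Ed d => (ψ p.2 - ψ p.1) ^ 2 * k t p.1 p.2) ∧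
      (∫ x, ∫ y, (ψ y - ψ x) ^ 2 * k t x y) ≤ M)
    (w : ℝ → Ed d → ℝ)
    (hw_nonneg : ∀ t ∈ I, ∀ x, 0 ≤ w t x)
    (hw_pos : ∀ t ∈ I, ∀ x ∈ ball (0 : Ed d) R, 0 < w t x)
    (t : ℝ) (ht : t ∈ I)
    (hint₁ : Integrable (fun p : Ed d × Ed d =>
      (w t p.2 - w t p.1) * (ψ p.1 ^ 2 / w t p.1 - ψ p.2 ^ 2 / w t p.2) * k t p.1 p.2))
    (hint₂ : IntegrableOn (fun p : Ed d × Ed d =>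
      ψ p.1 * ψ p.2 * (Real.log (w t p.2 / ψ p.2) - Real.log (w t p.1 / ψ p.1)) ^ 2 *
        k t p.1 p.2) (ball (0 : Ed d) R ×ˢ ball (0 : Ed d) R)) :
    (∫ x in ball (0 : Ed d) R, ∫ y in ball (0 : Ed d) R,
        ψ x * ψ y * (Real.log (w t y / ψ y) - Real.log (w t x / ψ x)) ^ 2 * k t x y)
      - 3 * (∫ x, ∫ y, (ψ y - ψ x) ^ 2 * k t x y) ≤
    ∫ x, ∫ y, (w t y - w t x) * (ψ x ^ 2 / w t x - ψ y ^ 2 / w t y) * k t x y :=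
  log_computation_rule_general d R hR I k hk_nonneg ψ hψ_cont hψ_supp hψ_pos hψ_energy w hw_nonneg
    hw_pos t ht hint₁ hint₂

end
end
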